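/- arXiv:1804.09454 — 3 statements merged into one kernel-verified Lean document; each statement's English description precedes it below -/
import Mathlib

section
/- The quasi-Clifford algebra over a field F of characteristic not 2, generated by m elements α₁,…,α_m subject to α_i² = κ_i (with κ_i nonzero in F) and α_j α_i = (-1)^{δ_{ij}} α_i α_j for i < j (with δ_{ij} ∈ {0,1}), has dimension 2^m as an F-vector space, with basis {α₁^{ε₁}⋯α_m^{ε_m} : ε_i ∈ {0,1}}. -/
open FreeAlgebra

/-- The defining relations of the quasi-Clifford algebra `C_F[m, (κᵢ), (δᵢⱼ)]`:
`αᵢ² = κᵢ` and `αⱼ αᵢ = (-1)^{δᵢⱼ} αᵢ αⱼ` for `i < j`. -/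
inductive QCRel (F : Type*) [Field F] (m : ℕ) (κ : Fin m → F) (δ : Fin m → Fin m → Fin 2) :
    FreeAlgebra F (Fin m) → FreeAlgebra F (Fin m) → Prop
  | sq (i : Fin m) : QCRel F m κ δ (ι F i * ι F i) (algebraMap F _ (κ i))
  | comm (i j : Fin m) (h : i < j) :
      QCRel F m κ δ (ι F j * ι F i) (((-1 : F) ^ (δ i j : ℕ)) • (ι F i * ι F j))

/-- The quasi-Clifford algebra `C_F[m, (κᵢ), (δᵢⱼ)]`. -/
abbrev QCAlgebra (F : Type*) [Field F] (m : ℕ) (κ : Fin m → F) (δ : Fin m → Fin m → Fin 2) :=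
  RingQuot (QCRel F m κ δ)

/-- The generator `αᵢ` of the quasi-Clifford algebra. -/
noncomputable def QCgen (F : Type*) [Field F] (m : ℕ) (κ : Fin m → F)
    (δ : Fin m → Fin m → Fin 2) (i : Fin m) : QCAlgebra F m κ δ :=
  RingQuot.mkAlgHom F (QCRel F m κ δ) (ι F i)

/-!
The ordered monomials `α^ε = α₁^{ε₁} ⋯ α_m^{ε_m}` span: by the relations, `αᵢ α^ε` is a scalar
multiple of `α^{ε + eᵢ}`, so their span is a left ideal containing `1`. They are linearly
independent because the algebra acts on the free module with basis `(e_ε)`, with `αᵢ` sending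
`e_ε` to `± κᵢ^{εᵢ} e_{ε + eᵢ}`, the sign recording the `αⱼ`, `j < i`, that `αᵢ` has to pass in
`αᵢ α^ε`. These operators satisfy the defining relations, and `α^ε` sends `e_0` to `e_ε`.
-/

theorem RingQuot.submodule_eq_top_of_ι_mul_mem {R X : Type*} [CommSemiring R]
    {r : FreeAlgebra R X → FreeAlgebra R X → Prop} (M : Submodule R (RingQuot r)) (h1 : 1 ∈ M)
    (hι : ∀ x, ∀ y ∈ M, RingQuot.mkAlgHom R r (ι R x) * y ∈ M) : M = ⊤ := by
  have hmul : ∀ a, ∀ y ∈ M, RingQuot.mkAlgHom R r a * y ∈ M := by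
    intro a
    induction a using FreeAlgebra.induction with
    | grade0 c => intro y hy; simpa [Algebra.smul_def] using M.smul_mem c hy
    | grade1 x => exact hι x
    | mul a b ha hb => intro y hy; rw [map_mul, mul_assoc]; exact ha _ (hb y hy)
    | add a b ha hb => intro y hy; rw [map_add, add_mul]; exact M.add_mem (ha y hy) (hb y hy)
  refine eq_top_iff.mpr fun x _ => ?_
  obtain ⟨a, rfl⟩ := RingQuot.mkAlgHom_surjective R r x
  simpa using hmul a 1 h1

theorem neg_one_pow_fin_two_add {R : Type*} [Monoid R] [HasDistribNeg R] (a b : Fin 2) :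
    (-1 : R) ^ ((a + b : Fin 2) : ℕ) = (-1) ^ (a : ℕ) * (-1) ^ (b : ℕ) := by
  fin_cases a <;> fin_cases b <;> simp

theorem add_single_one_add_single_one {ι : Type*} [DecidableEq ι] (ε : ι → Fin 2) (i : ι) :
    ε + Pi.single i 1 + Pi.single i 1 = ε := by
  rw [add_assoc, ← Pi.single_add, show (1 + 1 : Fin 2) = 0 from rfl, Pi.single_zero, add_zero]

namespace QCAlgebra

section Coefficients

variable {R : Type*} [CommRing R] {m : ℕ}

def coeff (κ : Fin m → R) (δ : Fin m → Fin m → Fin 2) (i : Fin m) (ε : Fin m → Fin 2) : R :=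
  (-1) ^ ((∑ j ∈ Finset.Iio i, δ j i * ε j : Fin 2) : ℕ) * κ i ^ (ε i : ℕ)

variable (κ : Fin m → R) (δ : Fin m → Fin m → Fin 2)

theorem sum_Iio_mul_add_single (i k : Fin m) (ε : Fin m → Fin 2) :
    ∑ j ∈ Finset.Iio i, δ j i * (ε + Pi.single k 1 : Fin m → Fin 2) j
      = ∑ j ∈ Finset.Iio i, δ j i * ε j + if k < i then δ k i else 0 := by
  simp [mul_add, Finset.sum_add_distrib, Pi.single_apply]

theorem coeff_add_single_of_lt {i k : Fin m} (h : k < i) (ε : Fin m → Fin 2) :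
    coeff κ δ i (ε + Pi.single k 1) = (-1) ^ (δ k i : ℕ) * coeff κ δ i ε := by
  rw [coeff, coeff, sum_Iio_mul_add_single, if_pos h, neg_one_pow_fin_two_add, Pi.add_apply,
    Pi.single_eq_of_ne h.ne', add_zero]
  ring

theorem coeff_add_single_of_gt {i k : Fin m} (h : i < k) (ε : Fin m → Fin 2) :
    coeff κ δ i (ε + Pi.single k 1) = coeff κ δ i ε := by
  rw [coeff, coeff, sum_Iio_mul_add_single, if_neg h.not_gt, add_zero, Pi.add_apply,
    Pi.single_eq_of_ne h.ne, add_zero]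

theorem coeff_add_single_self_mul (i : Fin m) (ε : Fin m → Fin 2) :
    coeff κ δ i (ε + Pi.single i 1) * coeff κ δ i ε = κ i := by
  rw [coeff, coeff, sum_Iio_mul_add_single, if_neg (lt_irrefl i), add_zero, Pi.add_apply,
    Pi.single_eq_same]
  set s : R := (-1) ^ ((∑ j ∈ Finset.Iio i, δ j i * ε j : Fin 2) : ℕ)
  have hs : s * s = 1 := by rw [← mul_pow, neg_mul_neg, one_mul, one_pow]
  generalize ε i = a
  fin_cases a <;> simp <;> linear_combination κ i * hs

theorem coeff_eq_one {i : Fin m} {ε : Fin m → Fin 2} (h : ∀ j ≤ i, ε j = 0) :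
    coeff κ δ i ε = 1 := by
  have hsum : ∑ j ∈ Finset.Iio i, δ j i * ε j = 0 :=
    Finset.sum_eq_zero fun j hj => by rw [h j (Finset.mem_Iio.mp hj).le, mul_zero]
  simp [coeff, h i le_rfl, hsum]

end Coefficients

section Model

variable {R : Type*} [CommRing R] {m : ℕ} (κ : Fin m → R) (δ : Fin m → Fin m → Fin 2)

noncomputable def genOp (i : Fin m) : Module.End R ((Fin m → Fin 2) →₀ R) :=
  Finsupp.linearCombination R fun ε => Finsupp.single (ε + Pi.single i 1) (coeff κ δ i ε)

theorem genOp_single (i : Fin m) (ε : Fin m → Fin 2) (c : R) :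
    genOp κ δ i (Finsupp.single ε c) = Finsupp.single (ε + Pi.single i 1) (c * coeff κ δ i ε) := by
  rw [genOp, Finsupp.linearCombination_single, Finsupp.smul_single, smul_eq_mul]

theorem genOp_mul_self (i : Fin m) : genOp κ δ i * genOp κ δ i = algebraMap R _ (κ i) := by
  refine Finsupp.lhom_ext fun ε c => ?_
  rw [Module.End.mul_apply, genOp_single, genOp_single, add_single_one_add_single_one,
    Module.algebraMap_end_apply, Finsupp.smul_single, mul_assoc, mul_comm (coeff κ δ i ε),
    coeff_add_single_self_mul, smul_eq_mul, mul_comm]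

theorem genOp_mul_genOp_of_lt {i j : Fin m} (h : i < j) :
    genOp κ δ j * genOp κ δ i = (-1 : R) ^ (δ i j : ℕ) • (genOp κ δ i * genOp κ δ j) := by
  refine Finsupp.lhom_ext fun ε c => ?_
  rw [LinearMap.smul_apply, Module.End.mul_apply, Module.End.mul_apply, genOp_single, genOp_single,
    genOp_single, genOp_single, coeff_add_single_of_lt κ δ h, coeff_add_single_of_gt κ δ h,
    Finsupp.smul_single, add_right_comm, smul_eq_mul]
  congr 1
  ring

theorem genOp_pow_single_of_forall_le {i : Fin m} {η : Fin m → Fin 2} (h : ∀ j ≤ i, η j = 0)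
    (e : Fin 2) :
    (genOp κ δ i ^ (e : ℕ)) (Finsupp.single η 1) = Finsupp.single (Function.update η i e) 1 := by
  fin_cases e
  · simp [← h i le_rfl]
  · have hupdate : η + Pi.single i 1 = Function.update η i 1 := by
      funext j
      rcases eq_or_ne j i with rfl | hj <;> simp [*]
    simp [genOp_single, coeff_eq_one κ δ h, hupdate]

theorem list_prod_genOp_pow_single (ε : Fin m → Fin 2) (l : List (Fin m))
    (hl : l.Pairwise (· < ·)) {η : Fin m → Fin 2} (hη : ∀ k ∈ l, ∀ j ≤ k, η j = 0) :
    (l.map fun j => genOp κ δ j ^ (ε j : ℕ)).prod (Finsupp.single η 1)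
      = Finsupp.single (fun j => if j ∈ l then ε j else η j) 1 := by
  induction l with
  | nil => simp
  | cons a l ih =>
    obtain ⟨ha, hl⟩ := List.pairwise_cons.mp hl
    have hη' : ∀ j ≤ a, (fun j => if j ∈ l then ε j else η j) j = 0 := fun j hj => by
      have hjl : j ∉ l := fun hj' => (ha j hj').not_ge hj
      simp [hjl, hη a List.mem_cons_self j hj]
    rw [List.map_cons, List.prod_cons, Module.End.mul_apply,
      ih hl fun k hk => hη k (List.mem_cons_of_mem a hk), genOp_pow_single_of_forall_le κ δ hη']
    congr 1
    funext j
    rcases eq_or_ne j a with rfl | hj <;> simp [*]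

end Model

section Algebra

variable {F : Type*} [Field F] {m : ℕ} (κ : Fin m → F) (δ : Fin m → Fin m → Fin 2)

noncomputable def rep : QCAlgebra F m κ δ →ₐ[F] Module.End F ((Fin m → Fin 2) →₀ F) :=
  RingQuot.liftAlgHom F ⟨FreeAlgebra.lift F (genOp κ δ), by
    rintro _ _ (i | ⟨i, j, h⟩)
    · simp [genOp_mul_self]
    · simp [genOp_mul_genOp_of_lt κ δ h]⟩

@[simp]
theorem rep_gen (i : Fin m) : rep κ δ (QCgen F m κ δ i) = genOp κ δ i := by
  simp [rep, QCgen]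

noncomputable def monomial (ε : Fin m → Fin 2) : QCAlgebra F m κ δ :=
  (List.ofFn fun i => QCgen F m κ δ i ^ (ε i : ℕ)).prod

theorem rep_monomial_single_zero (ε : Fin m → Fin 2) :
    rep κ δ (monomial κ δ ε) (Finsupp.single 0 1) = Finsupp.single ε 1 := by
  have h := list_prod_genOp_pow_single κ δ ε _ (List.pairwise_lt_finRange m) (η := 0)
    fun _ _ _ _ => rfl
  simpa [monomial, List.ofFn_eq_map, map_list_prod, Function.comp_def] using h

theorem linearIndependent_monomial : LinearIndependent F (monomial κ δ) :=
  .of_comp (LinearMap.applyₗ (Finsupp.single 0 1) ∘ₗ (rep κ δ).toLinearMap) <| by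
    convert Finsupp.linearIndependent_single_one F (Fin m → Fin 2) with ε
    exact rep_monomial_single_zero κ δ ε

theorem gen_mul_self (i : Fin m) :
    QCgen F m κ δ i * QCgen F m κ δ i = algebraMap F _ (κ i) := by
  simpa [QCgen] using RingQuot.mkAlgHom_rel F (QCRel.sq (κ := κ) (δ := δ) i)

theorem gen_mul_gen_of_lt {i j : Fin m} (h : i < j) :
    QCgen F m κ δ j * QCgen F m κ δ i
      = (-1 : F) ^ (δ i j : ℕ) • (QCgen F m κ δ i * QCgen F m κ δ j) := by
  simpa [QCgen] using RingQuot.mkAlgHom_rel F (QCRel.comm (κ := κ) (δ := δ) i j h)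

theorem exists_gen_mul_gen_pow_self (i : Fin m) (e : Fin 2) :
    ∃ c : F, QCgen F m κ δ i * QCgen F m κ δ i ^ (e : ℕ)
      = c • QCgen F m κ δ i ^ ((e + 1 : Fin 2) : ℕ) := by
  fin_cases e
  · exact ⟨1, by simp⟩
  · exact ⟨κ i, by simp [gen_mul_self, Algebra.algebraMap_eq_smul_one]⟩

theorem exists_gen_mul_gen_pow_of_lt {a i : Fin m} (h : a < i) (e : Fin 2) :
    ∃ c : F, QCgen F m κ δ i * QCgen F m κ δ a ^ (e : ℕ)
      = c • (QCgen F m κ δ a ^ (e : ℕ) * QCgen F m κ δ i) := by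
  fin_cases e
  · exact ⟨1, by simp⟩
  · exact ⟨_, by simpa using gen_mul_gen_of_lt κ δ h⟩

theorem exists_gen_mul_list_prod (ε : Fin m → Fin 2) {i : Fin m} (l : List (Fin m))
    (hl : l.Pairwise (· < ·)) (hi : i ∈ l) :
    ∃ c : F, QCgen F m κ δ i * (l.map fun j => QCgen F m κ δ j ^ (ε j : ℕ)).prod
      = c • (l.map fun j =>
          QCgen F m κ δ j ^ ((ε + Pi.single i 1 : Fin m → Fin 2) j : ℕ)).prod := by
  induction l with
  | nil => simp at hi
  | cons a l ih =>
    obtain ⟨ha, hl⟩ := List.pairwise_cons.mp hl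
    simp only [List.map_cons, List.prod_cons]
    rcases List.mem_cons.mp hi with rfl | hi
    · have hrest : (l.map fun j => QCgen F m κ δ j ^ ((ε + Pi.single i 1 : Fin m → Fin 2) j : ℕ))
          = l.map fun j => QCgen F m κ δ j ^ (ε j : ℕ) :=
        List.map_congr_left fun j hj => by simp [(ha j hj).ne']
      obtain ⟨c, hc⟩ := exists_gen_mul_gen_pow_self κ δ i (ε i)
      exact ⟨c, by rw [hrest, ← mul_assoc, hc, smul_mul_assoc]; simp⟩
    · obtain ⟨c, hc⟩ := ih hl hi
      obtain ⟨d, hd⟩ := exists_gen_mul_gen_pow_of_lt κ δ (ha i hi) (ε a)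
      refine ⟨d * c, ?_⟩
      rw [← mul_assoc, hd, smul_mul_assoc, mul_assoc, hc, mul_smul_comm, smul_smul, Pi.add_apply,
        Pi.single_eq_of_ne (ha i hi).ne, add_zero]

theorem exists_gen_mul_monomial (i : Fin m) (ε : Fin m → Fin 2) :
    ∃ c : F, QCgen F m κ δ i * monomial κ δ ε = c • monomial κ δ (ε + Pi.single i 1) := by
  simpa only [monomial, List.ofFn_eq_map] using
    exists_gen_mul_list_prod κ δ ε _ (List.pairwise_lt_finRange m) (List.mem_finRange i)

theorem monomial_zero : monomial κ δ 0 = 1 := by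
  simp [monomial]

theorem span_monomial_eq_top : Submodule.span F (Set.range (monomial κ δ)) = ⊤ := by
  refine RingQuot.submodule_eq_top_of_ι_mul_mem _
    (monomial_zero κ δ ▸ Submodule.subset_span ⟨0, rfl⟩) fun i y hy => ?_
  induction hy using Submodule.span_induction with
  | mem _ hy =>
    obtain ⟨ε, rfl⟩ := hy
    obtain ⟨c, hc⟩ := exists_gen_mul_monomial κ δ i ε
    exact hc ▸ Submodule.smul_mem _ c (Submodule.subset_span ⟨_, rfl⟩)
  | zero => simp
  | add y z _ _ hy hz => rw [mul_add]; exact Submodule.add_mem _ hy hz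
  | smul c y _ hy => rw [mul_smul_comm]; exact Submodule.smul_mem _ c hy

end Algebra

end QCAlgebra

theorem stmt_0_general (F : Type*) [Field F] (m : ℕ) (κ : Fin m → F)
    (δ : Fin m → Fin m → Fin 2) :
    Module.finrank F (QCAlgebra F m κ δ) = 2 ^ m ∧
      ∃ B : Module.Basis (Fin m → Fin 2) F (QCAlgebra F m κ δ),
        ∀ ε : Fin m → Fin 2,
          B ε = (List.ofFn fun i => QCgen F m κ δ i ^ (ε i : ℕ)).prod := by
  let B := Module.Basis.mk (QCAlgebra.linearIndependent_monomial κ δ)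
    (QCAlgebra.span_monomial_eq_top κ δ).ge
  refine ⟨?_, B, fun ε => Module.Basis.mk_apply _ _ ε⟩
  simp [Module.finrank_eq_card_basis B]

/-- Gastineau-Hills (2.3): the quasi-Clifford algebra over a field `F` of characteristic
not 2, with each `κᵢ ≠ 0`, has dimension `2^m` over `F`, with basis the ordered products
`α₁^{ε₁} ⋯ α_m^{ε_m}`, `εᵢ ∈ {0,1}`. -/
theorem stmt_0 (F : Type*) [Field F] (m : ℕ) (hm : 0 < m) (κ : Fin m → F)
    (δ : Fin m → Fin m → Fin 2) (hchar : ringChar F ≠ 2) (hκ : ∀ i, κ i ≠ 0) :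
    Module.finrank F (QCAlgebra F m κ δ) = 2 ^ m ∧
      ∃ B : Module.Basis (Fin m → Fin 2) F (QCAlgebra F m κ δ),
        ∀ ε : Fin m → Fin 2,
          B ε = (List.ofFn fun i => QCgen F m κ δ i ^ (ε i : ℕ)).prod :=
  stmt_0_general F m κ δ
end

section
/- The tensor product over ℝ of the quaternions ℍ with itself is isomorphic as a real algebra to the algebra ℝ(4) of 4×4 real matrices. -/
/-!
The map `x ⊗ y ↦ (q ↦ x q ȳ)` identifies `ℍ ⊗ ℍ` with `ℍ ⊗ ℍᵐᵒᵖ` acting on `ℍ` by left and right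
multiplication. Its image contains the projection `q ↦ Re q = ¼ (q - i q i - j q j - k q k)`, hence
every map `q ↦ v · Re (ū q)`, and these span `End ℍ`. So the map is onto, and a surjection between
free modules of the same rank `16` is bijective: `ℍ` is an Azumaya algebra as soon as `2` is
invertible. The basis `1, i, j, k` turns `End ℍ` into `4 × 4` matrices.
-/

open scoped TensorProduct Quaternion
open MulOpposite

theorem Module.finrank_tensorProduct_mulOpposite_eq_finrank_end (R A : Type*) [CommRing R]
    [Ring A] [Algebra R A] [Module.Free R A] [Module.Finite R A] :
    Module.finrank R (A ⊗[R] Aᵐᵒᵖ) = Module.finrank R (Module.End R A) := by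
  nontriviality R
  rw [Module.finrank_tensorProduct, ← (opLinearEquiv R).finrank_eq, Module.finrank_linearMap]

noncomputable section

namespace Quaternion

variable {R : Type*} [CommRing R]

def basisOneIJK : Module.Basis (Fin 4) R ℍ[R] := QuaternionAlgebra.basisOneIJK (-1) 0 (-1)

@[simp]
theorem basisOneIJK_repr (q : ℍ[R]) : basisOneIJK.repr q = ![q.re, q.imI, q.imJ, q.imK] := rfl

theorem basisOneIJK_apply (m : Fin 4) :
    (basisOneIJK m : ℍ[R]) = ![1, ⟨0, 1, 0, 0⟩, ⟨0, 0, 1, 0⟩, ⟨0, 0, 0, 1⟩] m := by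
  refine basisOneIJK.repr.injective (Finsupp.ext fun n => ?_)
  fin_cases m <;> fin_cases n <;> simp <;> rfl

theorem basisOneIJK_repr_eq_re_star_mul (q : ℍ[R]) (m : Fin 4) :
    basisOneIJK.repr q m = (star (basisOneIJK m) * q).re := by
  simp only [re_mul, re_star, imI_star, imJ_star, imK_star]
  fin_cases m <;> simp [basisOneIJK_apply]

theorem sum_basisOneIJK_mul_mul_star (q : ℍ[R]) :
    ∑ m, basisOneIJK m * q * star (basisOneIJK m) = ((4 * q.re : R) : ℍ[R]) := by
  simp only [Fin.sum_univ_four]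
  ext <;> simp only [re_add, imI_add, imJ_add, imK_add, re_mul, imI_mul, imJ_mul, imK_mul,
    re_star, imI_star, imJ_star, imK_star] <;> simp [basisOneIJK_apply]
  ring

variable [Invertible (2 : R)]

theorem exists_mulLeftRight_eq_re :
    ∃ x, ∀ q : ℍ[R], AlgHom.mulLeftRight R ℍ[R] x q = q.re := by
  refine ⟨(⅟2 * ⅟2 : R) • ∑ m, basisOneIJK m ⊗ₜ op (star (basisOneIJK m)), fun q => ?_⟩
  have h4 : (⅟2 * ⅟2 * 4 : R) = 1 := by
    rw [show (4 : R) = 2 * 2 by norm_num, mul_mul_mul_comm, invOf_mul_self, one_mul]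
  simp only [map_smul, map_sum, LinearMap.smul_apply, LinearMap.sum_apply,
    AlgHom.mulLeftRight_apply, unop_op, sum_basisOneIJK_mul_mul_star, ← coe_smul, smul_eq_mul,
    ← mul_assoc, h4, one_mul]

theorem mulLeftRight_surjective : Function.Surjective (AlgHom.mulLeftRight R ℍ[R]) := by
  obtain ⟨x, hx⟩ := exists_mulLeftRight_eq_re (R := R)
  intro f
  refine ⟨∑ m, (f (basisOneIJK m) ⊗ₜ 1) * x * (star (basisOneIJK m) ⊗ₜ 1),
    LinearMap.ext fun q => ?_⟩
  simp only [map_sum, map_mul, LinearMap.sum_apply, Module.End.mul_apply,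
    AlgHom.mulLeftRight_apply, hx, unop_one, mul_one, mul_coe_eq_smul,
    ← basisOneIJK_repr_eq_re_star_mul]
  simp only [← map_smul, ← map_sum, Module.Basis.sum_repr]

instance : IsAzumaya R ℍ[R] where
  eq_of_smul_eq_smul h := by simpa using congrArg (·.re) (h 1)
  bij := OrzechProperty.bijective_of_surjective_of_finrank_le
    (AlgHom.mulLeftRight R ℍ[R]).toLinearMap mulLeftRight_surjective
    (Module.finrank_tensorProduct_mulOpposite_eq_finrank_end R ℍ[R]).le

def tensorSelfAlgEquivMatrix : ℍ[R] ⊗[R] ℍ[R] ≃ₐ[R] Matrix (Fin 4) (Fin 4) R :=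
  (Algebra.TensorProduct.congr AlgEquiv.refl starAe).trans <|
    (AlgEquiv.ofBijective _ IsAzumaya.bij).trans (algEquivMatrix basisOneIJK)

end Quaternion

end

/-- `ℍ ⊗_ℝ ℍ ≅ ℝ(4)`, the 4×4 real matrices, as real algebras. -/
theorem stmt_8 :
    Nonempty ((Quaternion ℝ ⊗[ℝ] Quaternion ℝ) ≃ₐ[ℝ] Matrix (Fin 4) (Fin 4) ℝ) :=
  ⟨Quaternion.tensorSelfAlgEquivMatrix⟩
end

section
/- If A₁,…,A_n are monomial {-1,0,1} matrices of order n with pairwise disjoint supports (A_j ∗ A_k = 0 for j ≠ k, where ∗ is the entrywise product) and ΣA_k ∈ {-1,1}^{n×n}, each A_k orthogonal, satisfying A_j A_kᵀ + λ_{jk} A_k A_jᵀ = 0 for j ≠ k, and B₁,…,B_n are {-1,1} matrices of order b satisfying B_j B_kᵀ - λ_{jk} B_k B_jᵀ = 0 for j ≠ k and Σ_k B_k B_kᵀ = n b I_b, then H = Σ_k A_k ⊗ B_k is a Hadamard matrix of order nb, i.e., H has entries in {-1,1} and H Hᵀ = n b I_{nb}. -/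
open Matrix
open scoped Kronecker

/-!
Expanding `H * Hᵀ` gives the double sum over `j, k` of `(A j * (A k)ᵀ) ⊗ₖ (B j * (B k)ᵀ)`.
For `j ≠ k` the two amicability relations carry opposite signs, so with `λ² = 1` the `(j, k)`
and `(k, j)` terms cancel; the diagonal terms are `1 ⊗ₖ B k * (B k)ᵀ` and sum to `n b • 1`.
Entrywise, disjointness of the supports leaves a single nonzero `A k` at each position, so each
entry of `H` is a product of two signs.
-/

theorem Finset.sum_sum_eq_sum_diag_of_antisymm {ι M : Type*} [Fintype ι] [DecidableEq ι]
    [AddCommGroup M] (f : ι → ι → M) (hf : Pairwise fun j k => f j k = -f k j) :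
    ∑ j, ∑ k, f j k = ∑ j, f j j := by
  have hoff : ∑ x ∈ (univ : Finset ι).offDiag, f x.1 x.2 = 0 :=
    sum_involution (fun x _ => x.swap)
      (fun x hx => by rw [hf (mem_offDiag.mp hx).2.2]; exact neg_add_cancel _)
      (fun x hx _ => by simpa [Prod.ext_iff, eq_comm] using (mem_offDiag.mp hx).2.2)
      (fun x hx => by simpa [and_comm, ne_comm] using hx)
      (fun x _ => x.swap_swap)
  rw [← sum_product', ← diag_union_offDiag,
    sum_union (disjoint_diag_offDiag _), hoff, add_zero, sum_diag]

namespace Matrix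

variable {ι l m n p R : Type*} [Fintype ι]

theorem exists_forall_ne_apply_eq_zero_of_hadamard_eq_zero [NonUnitalNonAssocSemiring R]
    [NoZeroDivisors R] {A : ι → Matrix l m R} (hdisj : Pairwise fun j k => A j ⊙ A k = 0)
    {i : l} {j : m} (hij : (∑ k, A k) i j ≠ 0) : ∃ k₀, ∀ k ≠ k₀, A k i j = 0 := by
  rw [sum_apply] at hij
  obtain ⟨k₀, -, hk₀⟩ := Finset.exists_ne_zero_of_sum_ne_zero hij
  refine ⟨k₀, fun k hk => ?_⟩
  have hprod : A k i j * A k₀ i j = 0 := congr_fun₂ (hdisj hk) i j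
  exact (mul_eq_zero.mp hprod).resolve_right hk₀

theorem kronecker_sum_apply_eq_neg_one_or_one [Ring R] [IsDomain R]
    {A : ι → Matrix l m R} {B : ι → Matrix n p R} (hdisj : Pairwise fun j k => A j ⊙ A k = 0)
    (hA : ∀ i j, (∑ k, A k) i j = -1 ∨ (∑ k, A k) i j = 1)
    (hB : ∀ k i j, B k i j = -1 ∨ B k i j = 1) :
    ∀ x y, (∑ k, A k ⊗ₖ B k) x y = -1 ∨ (∑ k, A k ⊗ₖ B k) x y = 1 := by
  rintro ⟨i, r⟩ ⟨j, c⟩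
  have hij : (∑ k, A k) i j ≠ 0 := by rcases hA i j with h | h <;> simp [h]
  obtain ⟨k₀, hk₀⟩ := exists_forall_ne_apply_eq_zero_of_hadamard_eq_zero hdisj hij
  have hAk₀ : (∑ k, A k) i j = A k₀ i j := by
    rw [sum_apply]; exact Fintype.sum_eq_single k₀ hk₀
  have hentry : (∑ k, A k ⊗ₖ B k) (i, r) (j, c) = A k₀ i j * B k₀ r c := by
    rw [sum_apply]
    exact Fintype.sum_eq_single k₀ fun k hk => by simp [hk₀ k hk]
  rw [hentry]
  rcases hAk₀ ▸ hA i j with h₁ | h₁ <;> rcases hB k₀ r c with h₂ | h₂ <;> simp [h₁, h₂]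

theorem kronecker_sum_mul_transpose_kronecker_sum [CommSemiring R] [Fintype m] [Fintype p]
    (A : ι → Matrix l m R) (B : ι → Matrix n p R) :
    (∑ k, A k ⊗ₖ B k) * (∑ k, A k ⊗ₖ B k)ᵀ =
      ∑ j, ∑ k, (A j * (A k)ᵀ) ⊗ₖ (B j * (B k)ᵀ) := by
  rw [transpose_sum, Matrix.sum_mul]
  refine Finset.sum_congr rfl fun j _ => ?_
  rw [Matrix.mul_sum]
  refine Finset.sum_congr rfl fun k _ => ?_
  rw [← kroneckerMap_transpose, ← mul_kronecker_mul]

theorem kronecker_eq_neg_of_add_smul_eq_zero_of_sub_smul_eq_zero [CommRing R]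
    {X X' : Matrix l m R} {Y Y' : Matrix n p R} {c : R} (hc : c * c = 1)
    (hX : X + c • X' = 0) (hY : Y - c • Y' = 0) : X ⊗ₖ Y = -(X' ⊗ₖ Y') := by
  rw [eq_neg_of_add_eq_zero_left hX, sub_eq_zero.mp hY, ← neg_smul, smul_kronecker,
    kronecker_smul, smul_smul, neg_mul, hc, neg_one_smul]

theorem one_kronecker_sum [Semiring R] [DecidableEq l] (B : ι → Matrix n p R) :
    ∑ k, (1 : Matrix l l R) ⊗ₖ B k = 1 ⊗ₖ ∑ k, B k := by
  ext ⟨i, r⟩ ⟨j, c⟩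
  simp [sum_apply, Finset.mul_sum]

end Matrix

theorem stmt_13_general {n b : ℕ}
    (A : Fin n → Matrix (Fin n) (Fin n) ℝ)
    (B : Fin n → Matrix (Fin b) (Fin b) ℝ)
    (Λ : Fin n → Fin n → ℝ)
    (hΛ : ∀ j k, j ≠ k → Λ j k = 1 ∨ Λ j k = -1)
    (hdisj : ∀ j k, j ≠ k → (A j) ⊙ (A k) = 0)
    (hsum : ∀ i j, (∑ k, A k) i j = -1 ∨ (∑ k, A k) i j = 1)
    (hAorth : ∀ k, A k * (A k)ᵀ = 1)
    (hAamic : ∀ j k, j ≠ k → A j * (A k)ᵀ + Λ j k • (A k * (A j)ᵀ) = 0)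
    (hBentries : ∀ k i j, B k i j = -1 ∨ B k i j = 1)
    (hBamic : ∀ j k, j ≠ k → B j * (B k)ᵀ - Λ j k • (B k * (B j)ᵀ) = 0)
    (hBsum : ∑ k, B k * (B k)ᵀ = ((n * b : ℕ) : ℝ) • 1) :
    (∀ p q, (∑ k, A k ⊗ₖ B k) p q = -1 ∨ (∑ k, A k ⊗ₖ B k) p q = 1) ∧
      (∑ k, A k ⊗ₖ B k) * (∑ k, A k ⊗ₖ B k)ᵀ = ((n * b : ℕ) : ℝ) • 1 := by
  refine ⟨kronecker_sum_apply_eq_neg_one_or_one (fun j k => hdisj j k) hsum hBentries, ?_⟩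
  have hoff : Pairwise fun j k =>
      (A j * (A k)ᵀ) ⊗ₖ (B j * (B k)ᵀ) = -((A k * (A j)ᵀ) ⊗ₖ (B k * (B j)ᵀ)) :=
    fun j k hjk => kronecker_eq_neg_of_add_smul_eq_zero_of_sub_smul_eq_zero
      (mul_self_eq_one_iff.mpr (hΛ j k hjk)) (hAamic j k hjk) (hBamic j k hjk)
  rw [kronecker_sum_mul_transpose_kronecker_sum, Finset.sum_sum_eq_sum_diag_of_antisymm _ hoff]
  simp only [hAorth, one_kronecker_sum, hBsum, kronecker_smul, one_kronecker_one]

/-- The plug-in construction: if the monomial `{-1,0,1}` matrices `A k` of order `n`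
have pairwise disjoint supports, sum to a `{-1,1}` matrix, are orthogonal and satisfy
`A j * (A k)ᵀ + λ j k • (A k * (A j)ᵀ) = 0` for `j ≠ k`, and the `{-1,1}` matrices
`B k` of order `b` satisfy `B j * (B k)ᵀ - λ j k • (B k * (B j)ᵀ) = 0` for `j ≠ k`
and `Σ k, B k * (B k)ᵀ = (n*b) • 1`, then `H = Σ k, A k ⊗ₖ B k` is a Hadamard matrix
of order `n * b`. -/
theorem stmt_13 {n b : ℕ}
    (A : Fin n → Matrix (Fin n) (Fin n) ℝ)
    (B : Fin n → Matrix (Fin b) (Fin b) ℝ)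
    (Λ : Fin n → Fin n → ℝ)
    (hΛ : ∀ j k, j ≠ k → Λ j k = 1 ∨ Λ j k = -1)
    (hΛsymm : ∀ j k, Λ j k = Λ k j)
    (hAentries : ∀ k i j, A k i j = -1 ∨ A k i j = 0 ∨ A k i j = 1)
    (hAmonomial_row : ∀ k i, ∃! j, A k i j ≠ 0)
    (hAmonomial_col : ∀ k j, ∃! i, A k i j ≠ 0)
    (hdisj : ∀ j k, j ≠ k → (A j) ⊙ (A k) = 0)
    (hsum : ∀ i j, (∑ k, A k) i j = -1 ∨ (∑ k, A k) i j = 1)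
    (hAorth : ∀ k, A k * (A k)ᵀ = 1)
    (hAamic : ∀ j k, j ≠ k → A j * (A k)ᵀ + Λ j k • (A k * (A j)ᵀ) = 0)
    (hBentries : ∀ k i j, B k i j = -1 ∨ B k i j = 1)
    (hBamic : ∀ j k, j ≠ k → B j * (B k)ᵀ - Λ j k • (B k * (B j)ᵀ) = 0)
    (hBsum : ∑ k, B k * (B k)ᵀ = ((n * b : ℕ) : ℝ) • 1) :
    (∀ p q, (∑ k, A k ⊗ₖ B k) p q = -1 ∨ (∑ k, A k ⊗ₖ B k) p q = 1) ∧
      (∑ k, A k ⊗ₖ B k) * (∑ k, A k ⊗ₖ B k)ᵀ = ((n * b : ℕ) : ℝ) • 1 :=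
  stmt_13_general A B Λ hΛ hdisj hsum hAorth hAamic hBentries hBamic hBsum
end
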